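/- arXiv:1908.03255 — 3 statements merged into one kernel-verified Lean document; each statement's English description precedes it below -/
import Mathlib

section
/- Let H₁ and H₂ be complex Hilbert spaces, let D₁ ⊆ H₁ and D₂ ⊆ H₂ be subspaces, let Q₁ and Q₂ be nonnegative Hermitian sesquilinear forms with domains D₁ and D₂ respectively, and let T : D₁ → D₂ be a linear map. Let k be a positive integer such that D₁ contains a k-dimensional subspace (so λ_k(Q₁, D₁) < ∞), and let α_k, β_k be real numbers with 0 < α_k < 1/(2k) and β_k > 0. Suppose that for every orthonormal set {u₁, …, u_k} ⊆ D₁ (orthonormal in H₁) and all indices 1 ≤ h, l ≤ k one has |⟨Tu_h, Tu_l⟩_{H₂} − δ_{hl}| ≤ α_k and |Q₂(Tu_h, Tu_l) − Q₁(u_h, u_l)| ≤ β_k. Then λ_k(Q₂, D₂) ≤ λ_k(Q₁, D₁) + 2k(α_k·λ_k(Q₁, D₁) + β_k). -/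
/-!
Choose a `k`-dimensional `L ⊆ D₁` whose Rayleigh quotient is at most `M`, slightly above
`λ_k(Q₁)`, and push it forward by `T`. In an orthonormal basis of `L` the hypotheses say that the
matrices of `⟪T·, T·⟫` and `Q₂(T·, T·)` are entrywise `α`- resp. `β`-close to those of `⟪·, ·⟫`
and `Q₁`; by Cauchy–Schwarz on the coefficients, `‖Tx‖² ≥ (1 - kα)‖x‖²` and
`Q₂(Tx, Tx) ≤ Q₁(x, x) + kβ‖x‖²` on `L`. So `T(L)` is a `k`-dimensional subspace of `D₂` with
Rayleigh quotient at most `(M + kβ)/(1 - kα) ≤ (1 + 2kα)M + 2kβ`, using `kα < 1/2`;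
then let `M → λ_k(Q₁)`.
-/

open scoped ComplexInnerProductSpace ENNReal

/-- The supremum of the Rayleigh quotient `Q(u,u)/‖u‖²` over nonzero `u` in a subspace `L`. -/
noncomputable def rayleighSup {H : Type*} [NormedAddCommGroup H] [InnerProductSpace ℂ H]
    (Q : H → H → ℂ) (L : Submodule ℂ H) : ℝ≥0∞ :=
  ⨆ u ∈ {u : H | u ∈ L ∧ u ≠ 0}, ENNReal.ofReal ((Q u u).re / ‖u‖ ^ 2)

/-- The k-th variational eigenvalue of a form `Q` with domain `D`:
the infimum, over all `k`-dimensional subspaces `L ⊆ D`, of the sup of the Rayleigh quotient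
over `L`; the infimum of the empty set is `+∞`. -/
noncomputable def varEig {H : Type*} [NormedAddCommGroup H] [InnerProductSpace ℂ H]
    (Q : H → H → ℂ) (D : Submodule ℂ H) (k : ℕ) : ℝ≥0∞ :=
  ⨅ L ∈ {L : Submodule ℂ H | L ≤ D ∧ Module.finrank ℂ ↥L = k}, rayleighSup Q L

/-- `Q` is a nonnegative Hermitian sesquilinear form with domain the subspace `D`:
it is linear in the first argument (and hence, being Hermitian, conjugate-linear in the
second), Hermitian, and `Q(u,u) ≥ 0` on `D`. -/
structure IsNonnegHermitianFormOn {H : Type*} [NormedAddCommGroup H] [InnerProductSpace ℂ H]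
    (Q : H → H → ℂ) (D : Submodule ℂ H) : Prop where
  add_left : ∀ u v w, u ∈ D → v ∈ D → w ∈ D → Q (u + v) w = Q u w + Q v w
  smul_left : ∀ (c : ℂ) (u v : H), u ∈ D → v ∈ D → Q (c • u) v = c * Q u v
  hermitian : ∀ u v, u ∈ D → v ∈ D → Q u v = starRingEnd ℂ (Q v u)
  nonneg : ∀ u, u ∈ D → 0 ≤ (Q u u).re

namespace IsNonnegHermitianFormOn

variable {H : Type*} [NormedAddCommGroup H] [InnerProductSpace ℂ H]
  {Q : H → H → ℂ} {D : Submodule ℂ H}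

lemma add_right (hQ : IsNonnegHermitianFormOn Q D) {u v w : H} (hu : u ∈ D) (hv : v ∈ D)
    (hw : w ∈ D) : Q u (v + w) = Q u v + Q u w := by
  rw [hQ.hermitian _ _ hu (D.add_mem hv hw), hQ.add_left _ _ _ hv hw hu, map_add,
    ← hQ.hermitian _ _ hu hv, ← hQ.hermitian _ _ hu hw]

lemma smul_right (hQ : IsNonnegHermitianFormOn Q D) (c : ℂ) {u v : H} (hu : u ∈ D)
    (hv : v ∈ D) : Q u (c • v) = starRingEnd ℂ c * Q u v := by
  rw [hQ.hermitian _ _ hu (D.smul_mem c hv), hQ.smul_left _ _ _ hv hu, map_mul,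
    ← hQ.hermitian _ _ hu hv]

/-- `Q` as a sesquilinear form on `D` in Mathlib's convention (conjugate-linear in the first
argument), hence with the arguments swapped. -/
noncomputable def sesqForm (hQ : IsNonnegHermitianFormOn Q D) : D →ₗ⋆[ℂ] D →ₗ[ℂ] ℂ :=
  LinearMap.mk₂'ₛₗ (starRingEnd ℂ) (RingHom.id ℂ) (fun x y => Q y x)
    (fun x₁ x₂ y => hQ.add_right y.2 x₁.2 x₂.2)
    (fun c x y => hQ.smul_right c y.2 x.2)
    (fun x y₁ y₂ => hQ.add_left _ _ _ y₁.2 y₂.2 x.2)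
    (fun c x y => hQ.smul_left c _ _ y.2 x.2)

@[simp]
lemma sesqForm_apply (hQ : IsNonnegHermitianFormOn Q D) (x y : D) : hQ.sesqForm x y = Q y x :=
  rfl

end IsNonnegHermitianFormOn

namespace OrthonormalBasis

variable {ι 𝕜 E F : Type*} [Fintype ι] [RCLike 𝕜] [NormedAddCommGroup E] [InnerProductSpace 𝕜 E]
  [NormedAddCommGroup F] [InnerProductSpace 𝕜 F]

theorem norm_apply_self_le (b : OrthonormalBasis ι 𝕜 E) (B : E →ₗ⋆[𝕜] E →ₗ[𝕜] 𝕜) {α : ℝ}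
    (hα : 0 ≤ α) (hB : ∀ i j, ‖B (b i) (b j)‖ ≤ α) (x : E) :
    ‖B x x‖ ≤ α * Fintype.card ι * ‖x‖ ^ 2 := by
  set c := b.repr x
  have hBx : B x x = ∑ i, ∑ j, starRingEnd 𝕜 (c i) * c j * B (b i) (b j) := by
    conv_lhs => rw [← b.sum_repr x]
    simp only [map_sum, LinearMap.sum_apply, LinearMap.map_smulₛₗ₂, map_smul, smul_eq_mul,
      Finset.mul_sum]
    rw [Finset.sum_comm]
    exact Finset.sum_congr rfl fun i _ => Finset.sum_congr rfl fun j _ => by ring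
  have hx : ‖x‖ ^ 2 = ∑ i, ‖c i‖ ^ 2 := by rw [← b.repr.norm_map x, EuclideanSpace.norm_sq_eq]
  calc ‖B x x‖ ≤ ∑ i, ∑ j, ‖c i‖ * ‖c j‖ * α := by
        rw [hBx]
        refine (norm_sum_le _ _).trans <| Finset.sum_le_sum fun i _ =>
          (norm_sum_le _ _).trans <| Finset.sum_le_sum fun j _ => ?_
        rw [norm_mul, norm_mul, RCLike.norm_conj]
        gcongr
        exact hB i j
    _ = α * (∑ i, ‖c i‖) ^ 2 := by
        rw [sq, Finset.sum_mul_sum]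
        simp only [Finset.mul_sum]
        exact Finset.sum_congr rfl fun i _ => Finset.sum_congr rfl fun j _ => by ring
    _ ≤ α * (Fintype.card ι * ∑ i, ‖c i‖ ^ 2) := by
        gcongr
        exact sq_sum_le_card_mul_sum_sq
    _ = α * Fintype.card ι * ‖x‖ ^ 2 := by rw [hx, mul_assoc]

theorem one_sub_mul_norm_sq_le [DecidableEq ι] (b : OrthonormalBasis ι 𝕜 E) (φ : E →ₗ[𝕜] F)
    {α : ℝ} (hα : 0 ≤ α)
    (h : ∀ i j, ‖inner 𝕜 (φ (b i)) (φ (b j)) - if i = j then 1 else 0‖ ≤ α) (x : E) :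
    (1 - α * Fintype.card ι) * ‖x‖ ^ 2 ≤ ‖φ x‖ ^ 2 := by
  have hB := b.norm_apply_self_le (((innerₛₗ 𝕜).comp φ).compl₂ φ - innerₛₗ 𝕜) hα
    (by simpa [b.inner_eq_ite] using h) x
  simp only [LinearMap.sub_apply, LinearMap.compl₂_apply, LinearMap.comp_apply,
    innerₛₗ_apply_apply] at hB
  have hre := (abs_le.mp ((RCLike.abs_re_le_norm _).trans hB)).1
  rw [map_sub, inner_self_eq_norm_sq, inner_self_eq_norm_sq] at hre
  linarith

end OrthonormalBasis

section Transition

variable {ι E H₁ H₂ : Type*} [Fintype ι] [NormedAddCommGroup E] [InnerProductSpace ℂ E]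
  [NormedAddCommGroup H₁] [InnerProductSpace ℂ H₁] [NormedAddCommGroup H₂] [InnerProductSpace ℂ H₂]
  {D₁ : Submodule ℂ H₁} {D₂ : Submodule ℂ H₂} {Q₁ : H₁ → H₁ → ℂ} {Q₂ : H₂ → H₂ → ℂ}

theorem OrthonormalBasis.re_apply_le_add (hQ₁ : IsNonnegHermitianFormOn Q₁ D₁)
    (hQ₂ : IsNonnegHermitianFormOn Q₂ D₂) (b : OrthonormalBasis ι ℂ E) (φ₁ : E →ₗ[ℂ] D₁)
    (φ₂ : E →ₗ[ℂ] D₂) {β : ℝ} (hβ : 0 ≤ β)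
    (h : ∀ i j, ‖Q₂ (φ₂ (b i)) (φ₂ (b j)) - Q₁ (φ₁ (b i)) (φ₁ (b j))‖ ≤ β) (x : E) :
    (Q₂ (φ₂ x) (φ₂ x)).re ≤ (Q₁ (φ₁ x) (φ₁ x)).re + β * Fintype.card ι * ‖x‖ ^ 2 := by
  have hB := b.norm_apply_self_le
    ((hQ₂.sesqForm.comp φ₂).compl₂ φ₂ - (hQ₁.sesqForm.comp φ₁).compl₂ φ₁) hβ
    (fun i j => by simpa using h j i) x
  simp only [LinearMap.sub_apply, LinearMap.compl₂_apply, LinearMap.comp_apply,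
    IsNonnegHermitianFormOn.sesqForm_apply] at hB
  have hre := (abs_le.mp ((Complex.abs_re_le_norm _).trans hB)).2
  rw [Complex.sub_re] at hre
  linarith

end Transition

section Variational

variable {E H : Type*} [NormedAddCommGroup E] [Module ℂ E]
  [NormedAddCommGroup H] [InnerProductSpace ℂ H] {Q : H → H → ℂ}

theorem re_le_mul_norm_sq_of_rayleighSup_le {L : Submodule ℂ H} {M : ℝ} (hM : 0 ≤ M)
    (h : rayleighSup Q L ≤ ENNReal.ofReal M) {x : H} (hx : x ∈ L) (hx₀ : x ≠ 0) :
    (Q x x).re ≤ M * ‖x‖ ^ 2 := by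
  have hle := (le_iSup₂ (f := fun u (_ : u ∈ {u : H | u ∈ L ∧ u ≠ 0}) =>
    ENNReal.ofReal ((Q u u).re / ‖u‖ ^ 2)) x ⟨hx, hx₀⟩).trans h
  rwa [ENNReal.ofReal_le_ofReal_iff hM, div_le_iff₀ (by positivity)] at hle

theorem rayleighSup_range_le (φ : E →ₗ[ℂ] H) {a C : ℝ} (ha : 0 < a) (hC : 0 ≤ C)
    (hφ : ∀ x, a * ‖x‖ ^ 2 ≤ ‖φ x‖ ^ 2) (hQ : ∀ x, x ≠ 0 → (Q (φ x) (φ x)).re ≤ C * ‖x‖ ^ 2) :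
    rayleighSup Q (LinearMap.range φ) ≤ ENNReal.ofReal (C / a) := by
  refine iSup₂_le ?_
  rintro _ ⟨⟨x, rfl⟩, hφx⟩
  have hx : x ≠ 0 := by rintro rfl; simp at hφx
  apply ENNReal.ofReal_le_ofReal
  rw [div_le_div_iff₀ (by positivity) ha]
  calc (Q (φ x) (φ x)).re * a ≤ C * ‖x‖ ^ 2 * a := by gcongr; exact hQ x hx
    _ = C * (a * ‖x‖ ^ 2) := by ring
    _ ≤ C * ‖φ x‖ ^ 2 := by gcongr; exact hφ x

theorem varEig_le_rayleighSup (Q : H → H → ℂ) {D L : Submodule ℂ H} (hLD : L ≤ D) :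
    varEig Q D (Module.finrank ℂ L) ≤ rayleighSup Q L :=
  iInf₂_le L ⟨hLD, rfl⟩

theorem exists_rayleighSup_lt_of_varEig_lt {D : Submodule ℂ H} {k : ℕ} {r : ℝ≥0∞}
    (h : varEig Q D k < r) : ∃ L ≤ D, Module.finrank ℂ L = k ∧ rayleighSup Q L < r := by
  simpa only [varEig, iInf_lt_iff, Set.mem_ofPred_eq, exists_prop, and_assoc] using h

theorem varEig_finrank_le_of_map {D : Submodule ℂ H} (φ : E →ₗ[ℂ] H) (hφD : ∀ x, φ x ∈ D)
    {a C : ℝ} (ha : 0 < a) (hC : 0 ≤ C) (hφ : ∀ x, a * ‖x‖ ^ 2 ≤ ‖φ x‖ ^ 2)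
    (hQ : ∀ x, x ≠ 0 → (Q (φ x) (φ x)).re ≤ C * ‖x‖ ^ 2) :
    varEig Q D (Module.finrank ℂ E) ≤ ENNReal.ofReal (C / a) := by
  have hinj : Function.Injective φ := (injective_iff_map_eq_zero φ).2 fun x hx => by
    have hx₀ := hφ x
    rw [hx, norm_zero, zero_pow two_ne_zero] at hx₀
    exact norm_eq_zero.1 (pow_eq_zero_iff two_ne_zero |>.1
      (le_antisymm (nonpos_of_mul_nonpos_right hx₀ ha) (sq_nonneg _)))
  calc varEig Q D (Module.finrank ℂ E)
      = varEig Q D (Module.finrank ℂ (LinearMap.range φ)) := by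
        rw [LinearMap.finrank_range_of_inj hinj]
    _ ≤ rayleighSup Q (LinearMap.range φ) :=
        varEig_le_rayleighSup Q (by rintro _ ⟨x, rfl⟩; exact hφD x)
    _ ≤ ENNReal.ofReal (C / a) := rayleighSup_range_le φ ha hC hφ hQ

end Variational

theorem varEig_le_of_transition_of_rayleighSup_le
    {H₁ H₂ : Type*} [NormedAddCommGroup H₁] [InnerProductSpace ℂ H₁]
    [NormedAddCommGroup H₂] [InnerProductSpace ℂ H₂] {D₁ : Submodule ℂ H₁} {D₂ : Submodule ℂ H₂}
    {Q₁ : H₁ → H₁ → ℂ} {Q₂ : H₂ → H₂ → ℂ}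
    (hQ₁ : IsNonnegHermitianFormOn Q₁ D₁) (hQ₂ : IsNonnegHermitianFormOn Q₂ D₂)
    (T : D₁ →ₗ[ℂ] H₂) (hT : ∀ u : D₁, T u ∈ D₂) {k : ℕ} (hk : 0 < k) {α β : ℝ}
    (hα : 0 ≤ α) (hβ : 0 ≤ β) (hkα : α * k < 1)
    (hyp : ∀ u : Fin k → D₁, Orthonormal ℂ (fun i => (u i : H₁)) →
      ∀ h l : Fin k,
        ‖(⟪T (u h), T (u l)⟫ - if h = l then 1 else 0)‖ ≤ α ∧
        ‖Q₂ (T (u h)) (T (u l)) - Q₁ (u h) (u l)‖ ≤ β)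
    {L : Submodule ℂ H₁} (hLD : L ≤ D₁) (hLk : Module.finrank ℂ L = k)
    {M : ℝ} (hM : 0 ≤ M) (hLM : rayleighSup Q₁ L ≤ ENNReal.ofReal M) :
    varEig Q₂ D₂ k ≤ ENNReal.ofReal ((M + β * k) / (1 - α * k)) := by
  have : FiniteDimensional ℂ L := Module.finite_of_finrank_pos (hLk ▸ hk)
  let b : OrthonormalBasis (Fin k) ℂ L := (stdOrthonormalBasis ℂ L).reindex (finCongr hLk)
  let ι := Submodule.inclusion hLD
  have hu : Orthonormal ℂ fun i => (ι (b i) : H₁) := b.orthonormal.comp_linearIsometry L.subtypeₗᵢ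
  have hnorm := b.one_sub_mul_norm_sq_le (T ∘ₗ ι) hα fun h l => (hyp _ hu h l).1
  have hQ := b.re_apply_le_add hQ₁ hQ₂ ι ((T ∘ₗ ι).codRestrict D₂ fun x => hT _) hβ
    fun h l => (hyp _ hu h l).2
  simp only [Fintype.card_fin] at hnorm hQ
  have hQ₁₂ : ∀ x : L, x ≠ 0 → (Q₂ (T (ι x)) (T (ι x))).re ≤ (M + β * k) * ‖x‖ ^ 2 :=
    fun x hx => by
      have hQ₁x : (Q₁ (ι x) (ι x)).re ≤ M * ‖x‖ ^ 2 :=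
        re_le_mul_norm_sq_of_rayleighSup_le hM hLM x.2 (by simpa [ι] using hx)
      have hQx : (Q₂ (T (ι x)) (T (ι x))).re ≤ (Q₁ (ι x) (ι x)).re + β * k * ‖x‖ ^ 2 := hQ x
      linarith
  calc varEig Q₂ D₂ k = varEig Q₂ D₂ (Module.finrank ℂ L) := by rw [hLk]
    _ ≤ _ := varEig_finrank_le_of_map (T ∘ₗ ι) (fun x => hT _) (by linarith) (by positivity)
        hnorm hQ₁₂

theorem add_div_one_sub_le {a c m : ℝ} (ha : 0 ≤ a) (ha' : a < 1 / 2) (hc : 0 ≤ c) (hm : 0 ≤ m) :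
    (m + c) / (1 - a) ≤ (1 + 2 * a) * m + 2 * c := by
  rw [div_le_iff₀ (by linarith)]
  have h₂ : 0 ≤ 1 - 2 * a := by linarith
  nlinarith [mul_nonneg (mul_nonneg ha hm) h₂, mul_nonneg hc h₂]

theorem varEig_le_of_transition_orthonormal_general
    {H₁ H₂ : Type*} [NormedAddCommGroup H₁] [InnerProductSpace ℂ H₁]
    [NormedAddCommGroup H₂] [InnerProductSpace ℂ H₂]
    (D₁ : Submodule ℂ H₁) (D₂ : Submodule ℂ H₂)
    (Q₁ : H₁ → H₁ → ℂ) (Q₂ : H₂ → H₂ → ℂ)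
    (hQ₁ : IsNonnegHermitianFormOn Q₁ D₁) (hQ₂ : IsNonnegHermitianFormOn Q₂ D₂)
    (T : D₁ →ₗ[ℂ] H₂) (hT : ∀ u : D₁, T u ∈ D₂)
    (k : ℕ) (hk : 0 < k)
    (αk βk : ℝ) (hα : 0 < αk) (hα' : αk < 1 / (2 * k)) (hβ : 0 < βk)
    (hyp : ∀ u : Fin k → D₁, Orthonormal ℂ (fun i => (u i : H₁)) →
      ∀ h l : Fin k,
        ‖(⟪T (u h), T (u l)⟫ - if h = l then 1 else 0)‖ ≤ αk ∧
        ‖Q₂ (T (u h)) (T (u l)) - Q₁ (u h) (u l)‖ ≤ βk) :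
    varEig Q₂ D₂ k ≤ varEig Q₁ D₁ k +
      ENNReal.ofReal (2 * k * (αk * (varEig Q₁ D₁ k).toReal + βk)) := by
  obtain hfin | hfin := eq_or_ne (varEig Q₁ D₁ k) ⊤
  · simp [hfin]
  set lam := (varEig Q₁ D₁ k).toReal
  have hkα : αk * k < 1 / 2 := by
    rw [lt_div_iff₀ (by positivity)] at hα'
    linarith
  have key : ∀ M ∈ Set.Ioi lam,
      varEig Q₂ D₂ k ≤ ENNReal.ofReal ((1 + 2 * (αk * k)) * M + 2 * (βk * k)) := by
    intro M hM
    have hM₀ : 0 < M := ENNReal.toReal_nonneg.trans_lt hM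
    obtain ⟨L, hLD, hLk, hLM⟩ := exists_rayleighSup_lt_of_varEig_lt (r := ENNReal.ofReal M)
      (by rwa [← ENNReal.ofReal_toReal hfin, ENNReal.ofReal_lt_ofReal_iff hM₀])
    calc varEig Q₂ D₂ k ≤ ENNReal.ofReal ((M + βk * k) / (1 - αk * k)) :=
          varEig_le_of_transition_of_rayleighSup_le hQ₁ hQ₂ T hT hk hα.le hβ.le (by linarith)
            hyp hLD hLk hM₀.le hLM.le
      _ ≤ _ := ENNReal.ofReal_le_ofReal
          (add_div_one_sub_le (by positivity) hkα (by positivity) hM₀.le)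
  have hlim : varEig Q₂ D₂ k ≤ ENNReal.ofReal ((1 + 2 * (αk * k)) * lam + 2 * (βk * k)) :=
    ge_of_tendsto (((ENNReal.continuous_ofReal.comp (by fun_prop)).tendsto lam).mono_left
      nhdsWithin_le_nhds) (eventually_nhdsWithin_of_forall key)
  rw [← ENNReal.ofReal_toReal hfin, ← ENNReal.ofReal_add ENNReal.toReal_nonneg (by positivity)]
  convert hlim using 2
  ring

/-- Lemma 2.2 of the paper: comparing variational eigenvalues via a transition operator `T`,
under the orthonormal-set hypothesis. -/
theorem varEig_le_of_transition_orthonormal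
    {H₁ H₂ : Type*} [NormedAddCommGroup H₁] [InnerProductSpace ℂ H₁] [CompleteSpace H₁]
    [NormedAddCommGroup H₂] [InnerProductSpace ℂ H₂] [CompleteSpace H₂]
    (D₁ : Submodule ℂ H₁) (D₂ : Submodule ℂ H₂)
    (Q₁ : H₁ → H₁ → ℂ) (Q₂ : H₂ → H₂ → ℂ)
    (hQ₁ : IsNonnegHermitianFormOn Q₁ D₁) (hQ₂ : IsNonnegHermitianFormOn Q₂ D₂)
    (T : D₁ →ₗ[ℂ] H₂) (hT : ∀ u : D₁, T u ∈ D₂)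
    (k : ℕ) (hk : 0 < k)
    (hdim : ∃ L : Submodule ℂ H₁, L ≤ D₁ ∧ Module.finrank ℂ ↥L = k)
    (αk βk : ℝ) (hα : 0 < αk) (hα' : αk < 1 / (2 * k)) (hβ : 0 < βk)
    (hyp : ∀ u : Fin k → D₁, Orthonormal ℂ (fun i => (u i : H₁)) →
      ∀ h l : Fin k,
        ‖(⟪T (u h), T (u l)⟫ - if h = l then 1 else 0)‖ ≤ αk ∧
        ‖Q₂ (T (u h)) (T (u l)) - Q₁ (u h) (u l)‖ ≤ βk) :
    varEig Q₂ D₂ k ≤ varEig Q₁ D₁ k +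
      ENNReal.ofReal (2 * k * (αk * (varEig Q₁ D₁ k).toReal + βk)) :=
  varEig_le_of_transition_orthonormal_general D₁ D₂ Q₁ Q₂ hQ₁ hQ₂ T hT k hk αk βk hα hα' hβ hyp
end

section
/- Let H be a complex Hilbert space, let D' ⊆ D be subspaces of H, let Q be a nonnegative Hermitian sesquilinear form with domain D, and let P be a nonnegative Hermitian sesquilinear form with domain D'. Suppose D' is dense in D with respect to the graph norm ‖u‖_Q = (‖u‖² + Q(u,u))^{1/2}. Let R : H → H satisfy R(H) ⊆ D and Q(Ru, v) + ⟨Ru, v⟩ = ⟨u, v⟩ for all u ∈ H and v ∈ D. For each t > 0 let R_t : H → H satisfy R_t(H) ⊆ D' and Q(R_t u, v) + t·P(R_t u, v) + ⟨R_t u, v⟩ = ⟨u, v⟩ for all u ∈ H and v ∈ D'. Then for every u ∈ H, ‖R_t u − R u‖ → 0 as t → 0⁺. -/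
open scoped ComplexInnerProductSpace ENNReal

/-!
Put `Q̃(a, b) = Q(a, b) + ⟨a, b⟩`. Testing both resolvent equations against `R_t u - v` for
`v ∈ D'` and subtracting, the Hermitian inequality `2 |Re B(a, b)| ≤ B(a, a) + B(b, b)` for
`B = Q̃` and `B = P` gives the Céa-type estimate
`‖R_t u - R u‖² ≤ Q̃(R_t u - R u) ≤ Q̃(R u - v) + t P(v, v)`.
Graph-norm density makes the first term small for a suitable `v`, and then `t → 0⁺` kills
the second.
-/

namespace IsNonnegHermitianFormOn

variable {H : Type*} [NormedAddCommGroup H] [InnerProductSpace ℂ H]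
  {Q : H → H → ℂ} {D : Submodule ℂ H}

lemma sub_left (hQ : IsNonnegHermitianFormOn Q D) {a b c : H}
    (ha : a ∈ D) (hb : b ∈ D) (hc : c ∈ D) : Q (a - b) c = Q a c - Q b c := by
  have h := hQ.add_left (a - b) b c (D.sub_mem ha hb) hb hc
  rw [sub_add_cancel] at h
  linear_combination -h

lemma add_right_s8 (hQ : IsNonnegHermitianFormOn Q D) {a b c : H}
    (ha : a ∈ D) (hb : b ∈ D) (hc : c ∈ D) : Q c (a + b) = Q c a + Q c b := by
  rw [hQ.hermitian c (a + b) hc (D.add_mem ha hb), hQ.add_left a b c ha hb hc, map_add,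
    ← hQ.hermitian c a hc ha, ← hQ.hermitian c b hc hb]

lemma sub_right (hQ : IsNonnegHermitianFormOn Q D) {a b c : H}
    (ha : a ∈ D) (hb : b ∈ D) (hc : c ∈ D) : Q c (a - b) = Q c a - Q c b := by
  rw [hQ.hermitian c (a - b) hc (D.sub_mem ha hb), hQ.sub_left ha hb hc, map_sub,
    ← hQ.hermitian c a hc ha, ← hQ.hermitian c b hc hb]

lemma re_add_add (hQ : IsNonnegHermitianFormOn Q D) {a b : H} (ha : a ∈ D) (hb : b ∈ D) :
    (Q (a + b) (a + b)).re = (Q a a).re + 2 * (Q a b).re + (Q b b).re := by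
  rw [hQ.add_left a b (a + b) ha hb (D.add_mem ha hb), hQ.add_right_s8 ha hb ha,
    hQ.add_right_s8 ha hb hb, hQ.hermitian b a hb ha]
  simp only [Complex.add_re, Complex.conj_re]
  ring

lemma re_sub_sub (hQ : IsNonnegHermitianFormOn Q D) {a b : H} (ha : a ∈ D) (hb : b ∈ D) :
    (Q (a - b) (a - b)).re = (Q a a).re - 2 * (Q a b).re + (Q b b).re := by
  rw [hQ.sub_left ha hb (D.sub_mem ha hb), hQ.sub_right ha hb ha,
    hQ.sub_right ha hb hb, hQ.hermitian b a hb ha]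
  simp only [Complex.sub_re, Complex.conj_re]
  ring

lemma abs_two_mul_re_le (hQ : IsNonnegHermitianFormOn Q D) {a b : H}
    (ha : a ∈ D) (hb : b ∈ D) : |2 * (Q a b).re| ≤ (Q a a).re + (Q b b).re := by
  have hadd := hQ.nonneg _ (D.add_mem ha hb)
  have hsub := hQ.nonneg _ (D.sub_mem ha hb)
  rw [hQ.re_add_add ha hb] at hadd
  rw [hQ.re_sub_sub ha hb] at hsub
  exact abs_le.mpr ⟨by linarith, by linarith⟩

/-- `Q̃(a, b) = Q(a, b) + ⟨a, b⟩`, with the paper's inner product `⟨a, b⟩ = ⟪b, a⟫`. -/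
lemma add_inner (hQ : IsNonnegHermitianFormOn Q D) :
    IsNonnegHermitianFormOn (fun a b => Q a b + ⟪b, a⟫) D where
  add_left u v w hu hv hw := by
    rw [hQ.add_left u v w hu hv hw, inner_add_right]
    ring
  smul_left c u v hu hv := by
    rw [hQ.smul_left c u v hu hv, inner_smul_right]
    ring
  hermitian u v hu hv := by
    rw [hQ.hermitian u v hu hv, map_add, inner_conj_symm]
  nonneg u hu := add_nonneg (hQ.nonneg u hu) (inner_self_nonneg (𝕜 := ℂ))

lemma ofReal_mul {c : ℝ} (hc : 0 ≤ c) (hQ : IsNonnegHermitianFormOn Q D) :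
    IsNonnegHermitianFormOn (fun a b => (c : ℂ) * Q a b) D where
  add_left u v w hu hv hw := by
    rw [hQ.add_left u v w hu hv hw, mul_add]
  smul_left c' u v hu hv := by
    rw [hQ.smul_left c' u v hu hv, mul_left_comm]
  hermitian u v hu hv := by
    rw [hQ.hermitian u v hu hv, map_mul, Complex.conj_ofReal]
  nonneg u hu := by
    rw [Complex.re_ofReal_mul]
    exact mul_nonneg hc (hQ.nonneg u hu)

variable {D' : Submodule ℂ H} {B C : H → H → ℂ} {ℓ : H → ℂ}

/-- Céa's lemma for a Galerkin approximation on `D' ⊆ D` perturbed by the form `C`. -/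
lemma re_sub_le_of_perturbed (hB : IsNonnegHermitianFormOn B D)
    (hC : IsNonnegHermitianFormOn C D') (hD : D' ≤ D) {w w' : H} (hw : w ∈ D) (hw' : w' ∈ D')
    (hwsol : ∀ x ∈ D, B w x = ℓ x) (hw'sol : ∀ x ∈ D', B w' x + C w' x = ℓ x)
    {v : H} (hv : v ∈ D') :
    (B (w' - w) (w' - w)).re ≤ (B (w - v) (w - v)).re + (C v v).re := by
  have hx : w' - v ∈ D' := D'.sub_mem hw' hv
  have he : w' - w ∈ D := D.sub_mem (hD hw') hw
  have hd : w - v ∈ D := D.sub_mem hw (hD hv)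
  have hsplit : w' - v = (w' - w) + (w - v) := by abel
  have horth : B (w' - w) (w' - v) + C w' (w' - v) = 0 := by
    rw [hB.sub_left (hD hw') hw (hD hx)]
    linear_combination hw'sol _ hx - hwsol _ (hD hx)
  rw [hC.sub_right hw' hv hw', hsplit, hB.add_right_s8 he hd he] at horth
  have hre := congrArg Complex.re horth
  simp only [Complex.add_re, Complex.sub_re, Complex.zero_re] at hre
  have hBed := abs_le.mp (hB.abs_two_mul_re_le he hd)
  have hCw'v := abs_le.mp (hC.abs_two_mul_re_le hw' hv)
  linarith [hC.nonneg w' hw']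

end IsNonnegHermitianFormOn

lemma eventually_mul_lt_nhdsGT_zero (c : ℝ) {δ : ℝ} (hδ : 0 < δ) :
    ∀ᶠ t in nhdsWithin (0 : ℝ) (Set.Ioi 0), t * c < δ := by
  have hlim : Filter.Tendsto (fun t : ℝ => t * c) (nhds 0) (nhds 0) :=
    (continuous_mul_const c).tendsto' 0 0 (zero_mul c)
  exact (hlim.mono_left nhdsWithin_le_nhds).eventually (gt_mem_nhds hδ)

theorem tendsto_resolvent_regularization_general {H : Type*} [NormedAddCommGroup H]
    [InnerProductSpace ℂ H]
    (D D' : Submodule ℂ H) (hD : D' ≤ D)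
    (Q P : H → H → ℂ)
    (hQ : IsNonnegHermitianFormOn Q D) (hP : IsNonnegHermitianFormOn P D')
    (hdense : ∀ u ∈ D, ∀ ε : ℝ, 0 < ε →
      ∃ v ∈ D', ‖u - v‖ ^ 2 + (Q (u - v) (u - v)).re < ε ^ 2)
    (R : H → H) (hRmem : ∀ u, R u ∈ D)
    (hReq : ∀ (u : H), ∀ v ∈ D, Q (R u) v + ⟪v, R u⟫ = ⟪v, u⟫)
    (Rt : ℝ → H → H) (hRtmem : ∀ t : ℝ, 0 < t → ∀ u, Rt t u ∈ D')
    (hRteq : ∀ t : ℝ, 0 < t → ∀ (u : H), ∀ v ∈ D',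
      Q (Rt t u) v + (t : ℂ) * P (Rt t u) v + ⟪v, Rt t u⟫ = ⟪v, u⟫) :
    ∀ u : H, Filter.Tendsto (fun t : ℝ => ‖Rt t u - R u‖)
      (nhdsWithin 0 (Set.Ioi 0)) (nhds 0) := by
  intro u
  refine Metric.tendsto_nhds.mpr fun ε hε => ?_
  obtain ⟨v, hv, hvε⟩ := hdense (R u) (hRmem u) ε hε
  filter_upwards [self_mem_nhdsWithin,
    eventually_mul_lt_nhdsGT_zero (P v v).re (sub_pos.mpr hvε)] with t (ht : 0 < t) htP
  have hest := hQ.add_inner.re_sub_le_of_perturbed (hP.ofReal_mul ht.le) hD (hRmem u)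
    (hRtmem t ht u) (hReq u) (fun x hx => by rw [← hRteq t ht u x hx]; ring) hv
  have hre_inner_self (x : H) : (⟪x, x⟫ : ℂ).re = ‖x‖ ^ 2 := inner_self_eq_norm_sq (𝕜 := ℂ) x
  simp only [Complex.add_re, hre_inner_self, Complex.re_ofReal_mul] at hest
  have hnorm : ‖Rt t u - R u‖ < ε := by
    nlinarith [hQ.nonneg _ (D.sub_mem (hD (hRtmem t ht u)) (hRmem u))]
  simpa [Real.dist_eq] using hnorm

/-- Abstract strong resolvent convergence (Theorem 3.2 of the paper): if `D' ⊆ D` is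
graph-norm dense, `R` is the resolvent determined by `Q(Ru,v) + ⟨Ru,v⟩ = ⟨u,v⟩` on `D`,
and `R_t` is the resolvent determined by `Q(R_t u,v) + t·P(R_t u,v) + ⟨R_t u,v⟩ = ⟨u,v⟩`
on `D'`, then `R_t u → R u` as `t → 0⁺` for every `u`.
(Here `⟨a,b⟩`, linear in the first argument, is `⟪b, a⟫` in Mathlib's convention.) -/
theorem tendsto_resolvent_regularization {H : Type*} [NormedAddCommGroup H]
    [InnerProductSpace ℂ H] [CompleteSpace H]
    (D D' : Submodule ℂ H) (hD : D' ≤ D)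
    (Q P : H → H → ℂ)
    (hQ : IsNonnegHermitianFormOn Q D) (hP : IsNonnegHermitianFormOn P D')
    (hdense : ∀ u ∈ D, ∀ ε : ℝ, 0 < ε →
      ∃ v ∈ D', ‖u - v‖ ^ 2 + (Q (u - v) (u - v)).re < ε ^ 2)
    (R : H → H) (hRmem : ∀ u, R u ∈ D)
    (hReq : ∀ (u : H), ∀ v ∈ D, Q (R u) v + ⟪v, R u⟫ = ⟪v, u⟫)
    (Rt : ℝ → H → H) (hRtmem : ∀ t : ℝ, 0 < t → ∀ u, Rt t u ∈ D')
    (hRteq : ∀ t : ℝ, 0 < t → ∀ (u : H), ∀ v ∈ D',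
      Q (Rt t u) v + (t : ℂ) * P (Rt t u) v + ⟪v, Rt t u⟫ = ⟪v, u⟫) :
    ∀ u : H, Filter.Tendsto (fun t : ℝ => ‖Rt t u - R u‖)
      (nhdsWithin 0 (Set.Ioi 0)) (nhds 0) :=
  tendsto_resolvent_regularization_general D D' hD Q P hQ hP hdense R hRmem hReq Rt hRtmem hRteq
end

section
/- Let H be a complex Hilbert space, let D' ⊆ D be subspaces of H, let Q be a Hermitian sesquilinear form with domain D satisfying Q(u,u) ≥ c·‖u‖² for all u ∈ D for some c > 0, and let P be a nonnegative Hermitian sesquilinear form with domain D'. Let t > 0 and C ≥ 0. Suppose N : H → H satisfies N(H) ⊆ D' and Q(Nu, v) = ⟨u, v⟩ for all u ∈ H and v ∈ D, and N_t : H → H satisfies N_t(H) ⊆ D' and Q(N_t u, v) + t·P(N_t u, v) = ⟨u, v⟩ for all u ∈ H and v ∈ D'. Suppose moreover that P(Nu, Nu) ≤ C²·‖u‖² and P(N_t u, N_t u) ≤ C²·‖u‖² for all u ∈ H. Then ‖N_t u − N u‖² ≤ (C²/c)·t·‖u‖² for every u ∈ H; in particular N_t converges to N in operator norm as t → 0⁺.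 -/
/-!
For `w = N_t u - N u`, both `N u` and `N_t u` represent `⟨u, ·⟩`, so in `Q(w, w)` only the
perturbation survives: `Q(w, w) = -t P(N_t u, w)`. Expanding `P(N_t u - N u, N_t u - N u) ≥ 0`
gives `-2 Re P(N_t u, w) ≤ P(N u, N u)`, and coercivity yields
`c ‖w‖² ≤ t P(N u, N u) / 2 ≤ t C² ‖u‖²`.
-/

open scoped ComplexInnerProductSpace ENNReal

/-- `Q` is a Hermitian sesquilinear form with domain the subspace `D`: it is linear in the
first argument (and hence, being Hermitian, conjugate-linear in the second) and Hermitian. -/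
structure IsHermitianFormOn {H : Type*} [NormedAddCommGroup H] [InnerProductSpace ℂ H]
    (Q : H → H → ℂ) (D : Submodule ℂ H) : Prop where
  add_left : ∀ u v w, u ∈ D → v ∈ D → w ∈ D → Q (u + v) w = Q u w + Q v w
  smul_left : ∀ (c : ℂ) (u v : H), u ∈ D → v ∈ D → Q (c • u) v = c * Q u v
  hermitian : ∀ u v, u ∈ D → v ∈ D → Q u v = starRingEnd ℂ (Q v u)

namespace IsHermitianFormOn

variable {H : Type*} [NormedAddCommGroup H] [InnerProductSpace ℂ H]
  {Q : H → H → ℂ} {D : Submodule ℂ H}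

theorem sub_left (hQ : IsHermitianFormOn Q D) {u v w : H}
    (hu : u ∈ D) (hv : v ∈ D) (hw : w ∈ D) : Q (u - v) w = Q u w - Q v w := by
  rw [sub_eq_add_neg, ← neg_one_smul ℂ v, hQ.add_left u _ w hu (D.smul_mem _ hv) hw,
    hQ.smul_left (-1) v w hv hw]
  ring

theorem sub_right (hQ : IsHermitianFormOn Q D) {u v w : H}
    (hu : u ∈ D) (hv : v ∈ D) (hw : w ∈ D) : Q u (v - w) = Q u v - Q u w := by
  rw [hQ.hermitian u (v - w) hu (D.sub_mem hv hw), hQ.sub_left hv hw hu, map_sub,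
    ← hQ.hermitian u v hu hv, ← hQ.hermitian u w hu hw]

theorem re_apply_comm (hQ : IsHermitianFormOn Q D) {u v : H} (hu : u ∈ D) (hv : v ∈ D) :
    (Q v u).re = (Q u v).re := by
  rw [hQ.hermitian v u hv hu, Complex.conj_re]

end IsHermitianFormOn

namespace IsNonnegHermitianFormOn

variable {H : Type*} [NormedAddCommGroup H] [InnerProductSpace ℂ H]
  {P : H → H → ℂ} {D : Submodule ℂ H}

theorem toIsHermitianFormOn (hP : IsNonnegHermitianFormOn P D) : IsHermitianFormOn P D :=
  ⟨hP.add_left, hP.smul_left, hP.hermitian⟩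

theorem two_mul_re_le (hP : IsNonnegHermitianFormOn P D) {u v : H}
    (hu : u ∈ D) (hv : v ∈ D) : 2 * (P u v).re ≤ (P u u).re + (P v v).re := by
  have hP' := hP.toIsHermitianFormOn
  have hexpand : P (u - v) (u - v) = P u u - P u v - P v u + P v v := by
    rw [hP'.sub_left hu hv (D.sub_mem hu hv), hP'.sub_right hu hu hv, hP'.sub_right hv hu hv]
    ring
  have hnonneg := hP.nonneg _ (D.sub_mem hu hv)
  rw [hexpand] at hnonneg
  simp only [Complex.add_re, Complex.sub_re, hP'.re_apply_comm hu hv] at hnonneg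
  linarith

theorem neg_two_mul_re_apply_sub_le (hP : IsNonnegHermitianFormOn P D) {u v : H}
    (hu : u ∈ D) (hv : v ∈ D) : -(2 * (P u (u - v)).re) ≤ (P v v).re := by
  rw [hP.toIsHermitianFormOn.sub_right hu hu hv, Complex.sub_re]
  linarith [hP.two_mul_re_le hu hv, hP.nonneg u hu]

end IsNonnegHermitianFormOn

/-- `⟨a, b⟩`, linear in the first argument, is `⟪b, a⟫` in Mathlib's convention. -/
theorem sq_norm_green_sub_le_general {H : Type*} [NormedAddCommGroup H]
    [InnerProductSpace ℂ H]
    (D D' : Submodule ℂ H) (hD : D' ≤ D)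
    (Q : H → H → ℂ) (hQ : IsHermitianFormOn Q D)
    (c : ℝ) (hc : 0 < c) (hcoerc : ∀ u ∈ D, c * ‖u‖ ^ 2 ≤ (Q u u).re)
    (P : H → H → ℂ) (hP : IsNonnegHermitianFormOn P D')
    (t : ℝ) (ht : 0 < t) (C : ℝ)
    (N : H → H) (hNmem : ∀ u, N u ∈ D')
    (hNeq : ∀ (u : H), ∀ v ∈ D, Q (N u) v = ⟪v, u⟫)
    (Nt : H → H) (hNtmem : ∀ u, Nt u ∈ D')
    (hNteq : ∀ (u : H), ∀ v ∈ D', Q (Nt u) v + (t : ℂ) * P (Nt u) v = ⟪v, u⟫)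
    (hPN : ∀ u : H, (P (N u) (N u)).re ≤ C ^ 2 * ‖u‖ ^ 2) :
    ∀ u : H, ‖Nt u - N u‖ ^ 2 ≤ (C ^ 2 / c) * t * ‖u‖ ^ 2 := by
  intro u
  have hw : Nt u - N u ∈ D' := D'.sub_mem (hNtmem u) (hNmem u)
  have hQw : Q (Nt u - N u) (Nt u - N u) = -(t * P (Nt u) (Nt u - N u)) := by
    linear_combination hQ.sub_left (hD (hNtmem u)) (hD (hNmem u)) (hD hw)
      + hNteq u _ hw - hNeq u _ (hD hw)
  have hPw : -(P (Nt u) (Nt u - N u)).re ≤ C ^ 2 * ‖u‖ ^ 2 := by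
    have := hP.neg_two_mul_re_apply_sub_le (hNtmem u) (hNmem u)
    linarith [hPN u, (by positivity : 0 ≤ C ^ 2 * ‖u‖ ^ 2)]
  have hcoerc_w : c * ‖Nt u - N u‖ ^ 2 ≤ t * (C ^ 2 * ‖u‖ ^ 2) :=
    calc c * ‖Nt u - N u‖ ^ 2 ≤ (Q (Nt u - N u) (Nt u - N u)).re := hcoerc _ (hD hw)
      _ = t * -(P (Nt u) (Nt u - N u)).re := by
        rw [hQw, Complex.neg_re, Complex.re_ofReal_mul, mul_neg]
      _ ≤ t * (C ^ 2 * ‖u‖ ^ 2) := mul_le_mul_of_nonneg_left hPw ht.le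
  rw [div_mul_eq_mul_div, div_mul_eq_mul_div, le_div_iff₀ hc]
  linarith

/-- Abstract norm resolvent convergence (Theorem 3.2 of the paper): under coercivity of `Q`
and uniform `P`-bounds on `N` and `N_t`, one has `‖N_t u − N u‖² ≤ (C²/c)·t·‖u‖²`.
(Here `⟨a,b⟩`, linear in the first argument, is `⟪b, a⟫` in Mathlib's convention.) -/
theorem sq_norm_green_sub_le {H : Type*} [NormedAddCommGroup H]
    [InnerProductSpace ℂ H] [CompleteSpace H]
    (D D' : Submodule ℂ H) (hD : D' ≤ D)
    (Q : H → H → ℂ) (hQ : IsHermitianFormOn Q D)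
    (c : ℝ) (hc : 0 < c) (hcoerc : ∀ u ∈ D, c * ‖u‖ ^ 2 ≤ (Q u u).re)
    (P : H → H → ℂ) (hP : IsNonnegHermitianFormOn P D')
    (t : ℝ) (ht : 0 < t) (C : ℝ) (hC : 0 ≤ C)
    (N : H → H) (hNmem : ∀ u, N u ∈ D')
    (hNeq : ∀ (u : H), ∀ v ∈ D, Q (N u) v = ⟪v, u⟫)
    (Nt : H → H) (hNtmem : ∀ u, Nt u ∈ D')
    (hNteq : ∀ (u : H), ∀ v ∈ D', Q (Nt u) v + (t : ℂ) * P (Nt u) v = ⟪v, u⟫)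
    (hPN : ∀ u : H, (P (N u) (N u)).re ≤ C ^ 2 * ‖u‖ ^ 2)
    (hPNt : ∀ u : H, (P (Nt u) (Nt u)).re ≤ C ^ 2 * ‖u‖ ^ 2) :
    ∀ u : H, ‖Nt u - N u‖ ^ 2 ≤ (C ^ 2 / c) * t * ‖u‖ ^ 2 :=
  sq_norm_green_sub_le_general D D' hD Q hQ c hc hcoerc P hP t ht C N hNmem hNeq Nt hNtmem hNteq hPN
end
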